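/- arXiv:2506.07592 — 3 statements merged into one kernel-verified Lean document; each statement's English description precedes it below -/
import Mathlib

section
/- Let Ω ⊂ ℝⁿ be an open set of finite positive measure and U ⊂ Ω a subset of positive measure such that |Ω \ U| / |Ω| ≤ α(Ω)/4, where α denotes the Fraenkel asymmetry. Then α(U) ≥ α(Ω)/2. -/
open MeasureTheory

/-- The Fraenkel asymmetry of a measurable set `E ⊆ ℝⁿ`: the infimum over balls `B`
with the same volume as `E` of `|E △ B| / |B|`. -/
noncomputable def fraenkelAsymmetry {n : ℕ} (E : Set (EuclideanSpace ℝ (Fin n))) : ℝ :=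
  sInf {a : ℝ | ∃ (x : EuclideanSpace ℝ (Fin n)) (r : ℝ), 0 < r ∧
    volume (Metric.ball x r) = volume E ∧
    a = (volume (symmDiff E (Metric.ball x r))).toReal /
        (volume (Metric.ball x r)).toReal}

section FraenkelHelpers

open Metric Set

variable {n : ℕ}

private lemma ball_vol (x : EuclideanSpace ℝ (Fin n)) {r : ℝ} (hr : 0 < r) :
    volume (Metric.ball x r) =
      ENNReal.ofReal (r ^ n) * volume (Metric.ball (0 : EuclideanSpace ℝ (Fin n)) 1) := by
  rw [Measure.addHaar_ball_of_pos volume x hr, finrank_euclideanSpace_fin]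

private lemma c_pos : 0 < volume (Metric.ball (0 : EuclideanSpace ℝ (Fin n)) 1) :=
  measure_ball_pos _ _ one_pos

private lemma c_ne_top : volume (Metric.ball (0 : EuclideanSpace ℝ (Fin n)) 1) ≠ ⊤ :=
  measure_ball_lt_top.ne

private lemma exists_radius (hn : n ≠ 0) {v : ENNReal} (h0 : v ≠ 0) (ht : v ≠ ⊤)
    (x : EuclideanSpace ℝ (Fin n)) :
    ∃ r : ℝ, 0 < r ∧ volume (Metric.ball x r) = v := by
  set c := volume (Metric.ball (0 : EuclideanSpace ℝ (Fin n)) 1) with hc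
  have hc0 : c ≠ 0 := c_pos.ne'
  have hct : c ≠ ⊤ := c_ne_top
  have hvt : 0 < v.toReal := ENNReal.toReal_pos h0 ht
  have hcr : 0 < c.toReal := ENNReal.toReal_pos hc0 hct
  set t : ℝ := v.toReal / c.toReal with htdef
  have htpos : 0 < t := div_pos hvt hcr
  refine ⟨t ^ ((n : ℝ)⁻¹), Real.rpow_pos_of_pos htpos _, ?_⟩
  rw [ball_vol x (Real.rpow_pos_of_pos htpos _), Real.rpow_inv_natCast_pow htpos.le hn]
  rw [ENNReal.ofReal_div_of_pos hcr, ENNReal.ofReal_toReal ht, ENNReal.ofReal_toReal hct]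
  exact ENNReal.div_mul_cancel hc0 hct

private lemma radius_mono (hn : n ≠ 0) {x : EuclideanSpace ℝ (Fin n)} {r r' : ℝ}
    (hr : 0 < r) (hr' : 0 < r')
    (h : volume (Metric.ball x r) ≤ volume (Metric.ball x r')) : r ≤ r' := by
  rw [ball_vol x hr, ball_vol x hr'] at h
  have hc0 : volume (Metric.ball (0 : EuclideanSpace ℝ (Fin n)) 1) ≠ 0 := c_pos.ne'
  have hct : volume (Metric.ball (0 : EuclideanSpace ℝ (Fin n)) 1) ≠ ⊤ := c_ne_top
  have h2 : ENNReal.ofReal (r ^ n) ≤ ENNReal.ofReal (r' ^ n) :=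
    (ENNReal.mul_le_mul_iff_left hc0 hct).mp h
  have h3 : r ^ n ≤ r' ^ n := by
    have := (ENNReal.ofReal_le_ofReal_iff (by positivity)).mp h2
    linarith
  exact le_of_pow_le_pow_left₀ hn hr'.le h3

private def asymSet (E : Set (EuclideanSpace ℝ (Fin n))) : Set ℝ :=
  {a : ℝ | ∃ (x : EuclideanSpace ℝ (Fin n)) (r : ℝ), 0 < r ∧
    volume (Metric.ball x r) = volume E ∧
    a = (volume (symmDiff E (Metric.ball x r))).toReal /
        (volume (Metric.ball x r)).toReal}

private lemma asymSet_nonneg (E : Set (EuclideanSpace ℝ (Fin n))) :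
    ∀ a ∈ asymSet E, (0:ℝ) ≤ a := by
  rintro a ⟨x, r, hr, hv, rfl⟩
  positivity

private lemma asymSet_bddBelow (E : Set (EuclideanSpace ℝ (Fin n))) : BddBelow (asymSet E) :=
  ⟨0, asymSet_nonneg E⟩

private lemma asymSet_nonempty (hn : n ≠ 0) {E : Set (EuclideanSpace ℝ (Fin n))}
    (h0 : volume E ≠ 0) (ht : volume E ≠ ⊤) : (asymSet E).Nonempty := by
  obtain ⟨r, hr, hv⟩ := exists_radius hn h0 ht 0
  exact ⟨_, 0, r, hr, hv, rfl⟩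


end FraenkelHelpers

theorem asymmetry_propagation_inward {n : ℕ}
    (Ω U : Set (EuclideanSpace ℝ (Fin n)))
    (hΩopen : IsOpen Ω) (hΩpos : volume Ω ≠ 0) (hΩfin : volume Ω ≠ ⊤)
    (hUΩ : U ⊆ Ω) (hUpos : volume U ≠ 0)
    (hratio : (volume (Ω \ U)).toReal / (volume Ω).toReal ≤ fraenkelAsymmetry Ω / 4) :
    fraenkelAsymmetry U ≥ fraenkelAsymmetry Ω / 2 := by
  have hUfin : volume U ≠ ⊤ := fun h => hΩfin (top_le_iff.mp (h ▸ measure_mono hUΩ))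
  rcases eq_or_ne n 0 with hn | hn
  · -- dimension 0 : everything is a point
    subst hn
    haveI : Subsingleton (EuclideanSpace ℝ (Fin 0)) :=
      ⟨fun a b => PiLp.ext fun i => i.elim0⟩
    have hball : ∀ (x : EuclideanSpace ℝ (Fin 0)) (r : ℝ), 0 < r →
        Metric.ball x r = Set.univ := by
      intro x r hr
      apply Set.eq_univ_of_forall
      intro y
      simp [Metric.mem_ball, Subsingleton.elim y x, hr]
    have huniv : ∀ (E : Set (EuclideanSpace ℝ (Fin 0))), volume E ≠ 0 → E = Set.univ := by
      intro E hE
      obtain ⟨y, hy⟩ := nonempty_of_measure_ne_zero hE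
      apply Set.eq_univ_of_forall
      intro z
      rwa [Subsingleton.elim z y]
    have key : ∀ (E : Set (EuclideanSpace ℝ (Fin 0))), volume E ≠ 0 →
        fraenkelAsymmetry E = 0 := by
      intro E hE
      have hEu := huniv E hE
      subst hEu
      have : {a : ℝ | ∃ (x : EuclideanSpace ℝ (Fin 0)) (r : ℝ), 0 < r ∧
          volume (Metric.ball x r) = volume (Set.univ : Set (EuclideanSpace ℝ (Fin 0))) ∧
          a = (volume (symmDiff Set.univ (Metric.ball x r))).toReal /
              (volume (Metric.ball x r)).toReal} = {0} := by
        ext a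
        simp only [Set.mem_setOf_eq, Set.mem_singleton_iff]
        constructor
        · rintro ⟨x, r, hr, -, rfl⟩
          rw [hball x r hr, symmDiff_self]
          simp
        · rintro rfl
          refine ⟨0, 1, one_pos, by rw [hball 0 1 one_pos], ?_⟩
          rw [hball 0 1 one_pos, symmDiff_self]
          simp
      rw [fraenkelAsymmetry, this, csInf_singleton]
    rw [key Ω hΩpos, key U hUpos]
    norm_num
  · -- main case
    set α := fraenkelAsymmetry Ω with hα
    have hαset : fraenkelAsymmetry Ω = sInf (asymSet Ω) := rfl
    have hα0 : 0 ≤ α := by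
      rw [hα, hαset]
      exact le_csInf (asymSet_nonempty hn hΩpos hΩfin) (asymSet_nonneg Ω)
    have hvΩ : 0 < (volume Ω).toReal := ENNReal.toReal_pos hΩpos hΩfin
    have hvU : 0 < (volume U).toReal := ENNReal.toReal_pos hUpos hUfin
    have main : ∀ a ∈ asymSet U, α / 2 ≤ a := by
      rintro a ⟨x, r, hr, hvol, rfl⟩
      obtain ⟨r', hr', hvol'⟩ := exists_radius hn hΩpos hΩfin x
      have hrr' : r ≤ r' := by
        apply radius_mono hn hr hr'
        rw [hvol, hvol']
        exact measure_mono hUΩ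
      have hBB' : Metric.ball x r ⊆ Metric.ball x r' := Metric.ball_subset_ball hrr'
      -- set inclusion
      have hsub : symmDiff Ω (Metric.ball x r') ⊆
          (Ω \ U) ∪ symmDiff U (Metric.ball x r) ∪ (Metric.ball x r' \ Metric.ball x r) := by
        intro y hy
        rw [Set.mem_symmDiff] at hy
        simp only [Set.mem_union, Set.mem_diff, Set.mem_symmDiff]
        rcases hy with ⟨hyΩ, hyB'⟩ | ⟨hyB', hyΩ⟩
        · by_cases hyU : y ∈ U
          · exact Or.inl (Or.inr (Or.inl ⟨hyU, fun h => hyB' (hBB' h)⟩))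
          · exact Or.inl (Or.inl ⟨hyΩ, hyU⟩)
        · by_cases hyB : y ∈ Metric.ball x r
          · exact Or.inl (Or.inr (Or.inr ⟨hyB, fun h => hyΩ (hUΩ h)⟩))
          · exact Or.inr ⟨hyB', hyB⟩
      -- measure bounds (in ENNReal)
      have hdiff : volume (Metric.ball x r' \ Metric.ball x r) ≤ volume (Ω \ U) := by
        rw [measure_diff hBB' measurableSet_ball.nullMeasurableSet measure_ball_lt_top.ne,
          hvol, hvol']
        rw [tsub_le_iff_right]
        calc volume Ω ≤ volume ((Ω \ U) ∪ U) := measure_mono (by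
              intro y hy; by_cases h : y ∈ U
              exacts [Or.inr h, Or.inl ⟨hy, h⟩])
          _ ≤ volume (Ω \ U) + volume U := measure_union_le _ _
      have hmeas : volume (symmDiff Ω (Metric.ball x r')) ≤
          volume (Ω \ U) + volume (symmDiff U (Metric.ball x r)) + volume (Ω \ U) :=
        calc volume (symmDiff Ω (Metric.ball x r')) ≤
            volume ((Ω \ U) ∪ symmDiff U (Metric.ball x r))
              + volume (Metric.ball x r' \ Metric.ball x r) :=
              le_trans (measure_mono hsub) (measure_union_le _ _)
          _ ≤ volume (Ω \ U) + volume (symmDiff U (Metric.ball x r)) + volume (Ω \ U) :=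
              add_le_add (measure_union_le _ _) hdiff
      -- finiteness
      have hfinS : volume (symmDiff U (Metric.ball x r)) ≠ ⊤ := by
        refine ne_top_of_le_ne_top ?_ (measure_mono symmDiff_le_sup)
        rw [← lt_top_iff_ne_top]
        exact lt_of_le_of_lt (measure_union_le _ _)
          (ENNReal.add_lt_top.mpr ⟨hUfin.lt_top, measure_ball_lt_top⟩)
      have hfind : volume (Ω \ U) ≠ ⊤ :=
        ne_top_of_le_ne_top hΩfin (measure_mono Set.diff_subset)
      -- pass to reals
      have hmeasR : (volume (symmDiff Ω (Metric.ball x r'))).toReal ≤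
          (volume (Ω \ U)).toReal + (volume (symmDiff U (Metric.ball x r))).toReal
            + (volume (Ω \ U)).toReal := by
        have := ENNReal.toReal_mono (by
            simp [ENNReal.add_ne_top, hfinS, hfind]) hmeas
        rwa [ENNReal.toReal_add (ENNReal.add_ne_top.mpr ⟨hfind, hfinS⟩) hfind,
          ENNReal.toReal_add hfind hfinS] at this
      -- α ≤ asymmetry of Ω at ball x r'
      have hαle : α * (volume Ω).toReal ≤ (volume (symmDiff Ω (Metric.ball x r'))).toReal := by
        have hmem : (volume (symmDiff Ω (Metric.ball x r'))).toReal /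
            (volume (Metric.ball x r')).toReal ∈ asymSet Ω := ⟨x, r', hr', hvol', rfl⟩
        have h1 : α ≤ (volume (symmDiff Ω (Metric.ball x r'))).toReal /
            (volume (Metric.ball x r')).toReal := by
          rw [hα, hαset]; exact csInf_le (asymSet_bddBelow Ω) hmem
        rw [hvol'] at h1
        calc α * (volume Ω).toReal ≤ ((volume (symmDiff Ω (Metric.ball x r'))).toReal /
              (volume Ω).toReal) * (volume Ω).toReal := by
              exact mul_le_mul_of_nonneg_right h1 hvΩ.le
          _ = (volume (symmDiff Ω (Metric.ball x r'))).toReal := by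
              field_simp
      -- ratio bound
      have hratio' : (volume (Ω \ U)).toReal ≤ α / 4 * (volume Ω).toReal := by
        rw [div_le_iff₀ hvΩ] at hratio
        exact hratio
      have hUle : (volume U).toReal ≤ (volume Ω).toReal :=
        ENNReal.toReal_mono hΩfin (measure_mono hUΩ)
      have hT : α / 2 * (volume U).toReal ≤
          (volume (symmDiff U (Metric.ball x r))).toReal := by
        nlinarith [hmeasR, hαle, hratio', hUle, hα0, hvU]
      rw [hvol]
      rw [le_div_iff₀ hvU]
      exact hT
    rw [ge_iff_le]
    exact le_csInf (asymSet_nonempty hn hUpos hUfin) main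
end

section
/- Let U, Ω ⊂ ℝⁿ be measurable sets of finite positive measure with Ω ⊂ U and |U \ Ω| / |Ω| ≤ α(Ω)/4, where α is the Fraenkel asymmetry. Then α(U) ≥ α(Ω)/3. -/
open MeasureTheory

lemma fraenkelAsymmetry_nonneg {n : ℕ} (E : Set (EuclideanSpace ℝ (Fin n))) :
    0 ≤ fraenkelAsymmetry E := by
  apply Real.sInf_nonneg
  rintro a ⟨x, r, hr, hv, rfl⟩
  positivity

lemma exists_ball_of_volume {n : ℕ} (hn : 0 < n) (x : EuclideanSpace ℝ (Fin n))
    {m : ENNReal} (hm0 : m ≠ 0) (hmt : m ≠ ⊤) :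
    ∃ r : ℝ, 0 < r ∧ volume (Metric.ball x r) = m := by
  haveI : Nonempty (Fin n) := ⟨⟨0, hn⟩⟩
  set c : ENNReal := volume (Metric.ball (0 : EuclideanSpace ℝ (Fin n)) 1) with hc
  have hc0 : c ≠ 0 := (Metric.measure_ball_pos _ _ one_pos).ne'
  have hct : c ≠ ⊤ := measure_ball_lt_top.ne
  have hcr : 0 < c.toReal := ENNReal.toReal_pos hc0 hct
  have hmr : 0 < m.toReal := ENNReal.toReal_pos hm0 hmt
  refine ⟨(m.toReal / c.toReal) ^ ((n : ℝ)⁻¹), Real.rpow_pos_of_pos (by positivity) _, ?_⟩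
  rw [Measure.addHaar_ball volume x (Real.rpow_pos_of_pos (by positivity) _).le]
  rw [finrank_euclideanSpace_fin]
  rw [Real.rpow_inv_natCast_pow (by positivity) hn.ne']
  rw [ENNReal.ofReal_div_of_pos hcr, ENNReal.ofReal_toReal hmt, ENNReal.ofReal_toReal hct,
    ← hc, ENNReal.div_mul_cancel hc0 hct]

theorem asymmetry_propagation_outward {n : ℕ}
    (Ω U : Set (EuclideanSpace ℝ (Fin n)))
    (hΩmeas : MeasurableSet Ω) (hUmeas : MeasurableSet U)
    (hΩpos : volume Ω ≠ 0) (hΩfin : volume Ω ≠ ⊤)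
    (hUpos : volume U ≠ 0) (hUfin : volume U ≠ ⊤)
    (hΩU : Ω ⊆ U)
    (hratio : (volume (U \ Ω)).toReal / (volume Ω).toReal ≤ fraenkelAsymmetry Ω / 4) :
    fraenkelAsymmetry U ≥ fraenkelAsymmetry Ω / 3 := by
  rcases Nat.eq_zero_or_pos n with h0 | hn
  · -- trivial case: the space is a single point, so Ω = U
    subst h0
    have hsub : Subsingleton (EuclideanSpace ℝ (Fin 0)) := inferInstance
    have hΩU' : Ω = U := by
      apply Set.Subset.antisymm hΩU
      intro z hz
      obtain ⟨y, hy⟩ := nonempty_of_measure_ne_zero hΩpos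
      rwa [Subsingleton.elim z y]
    rw [hΩU']
    linarith [fraenkelAsymmetry_nonneg U]
  · -- main case
    set α := fraenkelAsymmetry Ω with hα
    have hΩUfin : volume (U \ Ω) ≠ ⊤ := ne_top_of_le_ne_top hUfin (measure_mono Set.diff_subset)
    set vΩ := (volume Ω).toReal with hvΩdef
    set vU := (volume U).toReal with hvUdef
    set d := (volume (U \ Ω)).toReal with hddef
    have hvΩ : 0 < vΩ := ENNReal.toReal_pos hΩpos hΩfin
    have hvU : 0 < vU := ENNReal.toReal_pos hUpos hUfin
    have hd0 : 0 ≤ d := ENNReal.toReal_nonneg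
    -- vU = vΩ + d
    have hvU_eq : vU = vΩ + d := by
      have : volume Ω + volume (U \ Ω) = volume U := by
        rw [measure_add_diff hΩmeas.nullMeasurableSet U, Set.union_eq_self_of_subset_left hΩU]
      rw [hvUdef, ← this, ENNReal.toReal_add hΩfin hΩUfin]
    have hd : d ≤ α / 4 * vΩ := by
      rw [div_le_iff₀ hvΩ] at hratio
      linarith
    have hbdd : BddBelow {a : ℝ | ∃ (x : EuclideanSpace ℝ (Fin n)) (r : ℝ), 0 < r ∧
        volume (Metric.ball x r) = volume Ω ∧
        a = (volume (symmDiff Ω (Metric.ball x r))).toReal /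
            (volume (Metric.ball x r)).toReal} := by
      refine ⟨0, ?_⟩
      rintro a ⟨x, r, hr, hv, rfl⟩
      positivity
    unfold fraenkelAsymmetry
    obtain ⟨r₀, hr₀, hv₀⟩ := exists_ball_of_volume hn (0 : EuclideanSpace ℝ (Fin n)) hUpos hUfin
    refine le_csInf ⟨_, 0, r₀, hr₀, hv₀, rfl⟩ ?_
    rintro a ⟨x, r, hr, hvB, rfl⟩
    set B := Metric.ball x r with hBdef
    -- the ball of measure vol Ω with the same center
    obtain ⟨r', hr', hvB'⟩ := exists_ball_of_volume hn x hΩpos hΩfin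
    set B' := Metric.ball x r' with hB'def
    have hBfin : volume B ≠ ⊤ := by rw [hvB]; exact hUfin
    have hB'fin : volume B' ≠ ⊤ := by rw [hvB']; exact hΩfin
    -- r' ≤ r
    haveI : Nonempty (Fin n) := ⟨⟨0, hn⟩⟩
    have hrr : r' ≤ r := by
      by_contra hlt
      push_neg at hlt
      have hmono : volume B < volume B' := by
        rw [hBdef, hB'def, Measure.addHaar_ball volume x hr.le,
          Measure.addHaar_ball volume x hr'.le, finrank_euclideanSpace_fin]
        have hc0 : volume (Metric.ball (0 : EuclideanSpace ℝ (Fin n)) 1) ≠ 0 :=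
          (Metric.measure_ball_pos _ _ one_pos).ne'
        have hct : volume (Metric.ball (0 : EuclideanSpace ℝ (Fin n)) 1) ≠ ⊤ :=
          measure_ball_lt_top.ne
        have hpow : r ^ n < r' ^ n := pow_lt_pow_left₀ hlt hr.le hn.ne'
        exact ENNReal.mul_lt_mul_left hc0 hct
          ((ENNReal.ofReal_lt_ofReal_iff (by positivity)).mpr hpow)
      rw [hvB, hvB'] at hmono
      exact absurd (measure_mono hΩU) (not_le.mpr hmono)
    have hBB' : B' ⊆ B := Metric.ball_subset_ball hrr
    -- volume (B ∆ B') = volume (U \ Ω)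
    have hBdiff : volume (symmDiff B B') = volume (U \ Ω) := by
      rw [symmDiff_of_ge (hBB' : B' ≤ B)]
      rw [measure_diff hBB' measurableSet_ball.nullMeasurableSet hB'fin,
        measure_diff hΩU hΩmeas.nullMeasurableSet hΩfin, hvB, hvB']
    -- triangle inequalities
    have htri1 : volume (symmDiff Ω B') ≤ volume (symmDiff Ω B) + volume (symmDiff B B') :=
      (measure_mono (symmDiff_triangle Ω B B')).trans (measure_union_le _ _)
    have htri2 : volume (symmDiff Ω B) ≤ volume (U \ Ω) + volume (symmDiff U B) := by
      refine (measure_mono (symmDiff_triangle Ω U B)).trans ?_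
      rw [symmDiff_of_le (hΩU : Ω ≤ U)]
      exact measure_union_le _ _
    -- finiteness
    have hfΩB : volume (symmDiff Ω B) ≠ ⊤ := measure_symmDiff_ne_top hΩfin hBfin
    have hfΩB' : volume (symmDiff Ω B') ≠ ⊤ := measure_symmDiff_ne_top hΩfin hB'fin
    have hfUB : volume (symmDiff U B) ≠ ⊤ := measure_symmDiff_ne_top hUfin hBfin
    set sB := (volume (symmDiff U B)).toReal with hsBdef
    set sΩB := (volume (symmDiff Ω B)).toReal with hsΩBdef
    set sΩB' := (volume (symmDiff Ω B')).toReal with hsΩB'def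
    have hsB0 : 0 ≤ sB := ENNReal.toReal_nonneg
    have h1 : sΩB' ≤ sΩB + d := by
      rw [hBdiff] at htri1
      have := ENNReal.toReal_mono (by finiteness) htri1
      rwa [ENNReal.toReal_add hfΩB hΩUfin] at this
    have h2 : sΩB ≤ d + sB := by
      have := ENNReal.toReal_mono (by finiteness) htri2
      rwa [ENNReal.toReal_add hΩUfin hfUB] at this
    -- α ≤ sΩB' / vΩ
    have hmem : sΩB' / vΩ ∈ {a : ℝ | ∃ (x : EuclideanSpace ℝ (Fin n)) (r : ℝ), 0 < r ∧
        volume (Metric.ball x r) = volume Ω ∧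
        a = (volume (symmDiff Ω (Metric.ball x r))).toReal /
            (volume (Metric.ball x r)).toReal} := by
      refine ⟨x, r', hr', hvB', ?_⟩
      rw [hvB']
    have hαle : α ≤ sΩB' / vΩ := csInf_le hbdd hmem
    have hαvΩ : α * vΩ ≤ sΩB' := by
      rw [le_div_iff₀ hvΩ] at hαle
      linarith
    -- α ≤ 2
    have hs2 : sΩB' ≤ vΩ + vΩ := by
      have : volume (symmDiff Ω B') ≤ volume Ω + volume B' :=
        (measure_mono symmDiff_le_sup).trans (measure_union_le _ _)
      have := ENNReal.toReal_mono (by finiteness) this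
      rwa [ENNReal.toReal_add hΩfin hB'fin, hvB'] at this
    have hα2 : α ≤ 2 := by nlinarith
    have hα0 : 0 ≤ α := fraenkelAsymmetry_nonneg Ω
    -- conclude
    rw [hvB, le_div_iff₀ hvU]
    nlinarith [mul_nonneg hα0 hd0, mul_nonneg hα0 hvΩ.le]
end

section
/- Let n ≥ 3 and let 0 < a, b. Then (a + b)^{2/n} - a^{2/n} - b^{2/n} < 0; in particular, for the radial torsion problem in dimension n ≥ 3 with G = B₁ and S = B_R \ B_r (r < R ≤ 1), the value V(0) − u(0) = (n^{-1} ω_n^{-2/n}/2) ((|B_r| + |S|)^{2/n} − |B_r|^{2/n} − |S|^{2/n}) is strictly negative, so no pointwise comparison u* ≤ V can hold. -/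
open MeasureTheory

/-- For `n ≥ 3` the function `t ↦ t^(2/n)` is strictly subadditive on positive reals;
consequently the quantity `V(0) − u(0)` from the radial counterexample (Remark on
dimensions `n ≥ 3`) is strictly negative, so no pointwise comparison `u* ≤ V` can hold. -/
theorem no_pointwise_comparison_dim_ge_three (n : ℕ) (hn : 3 ≤ n) (a b : ℝ)
    (ha : 0 < a) (hb : 0 < b) :
    (a + b) ^ ((2 : ℝ) / n) - a ^ ((2 : ℝ) / n) - b ^ ((2 : ℝ) / n) < 0 ∧
    ∀ ωn : ℝ, 0 < ωn →
      ((n : ℝ)⁻¹ * ωn ^ (-(2 : ℝ) / n) / 2) *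
        ((a + b) ^ ((2 : ℝ) / n) - a ^ ((2 : ℝ) / n) - b ^ ((2 : ℝ) / n)) < 0 := by
  set p : ℝ := (2 : ℝ) / n with hp
  have hn0 : (0 : ℝ) < n := by positivity
  have hp1 : p < 1 := by
    rw [hp, div_lt_one hn0]
    exact_mod_cast lt_of_lt_of_le (by norm_num) hn
  have hpm : p - 1 < 0 := by linarith
  have key : (a + b) ^ p < a ^ p + b ^ p := by
    have h1 : (a + b) ^ (p - 1) < a ^ (p - 1) :=
      Real.rpow_lt_rpow_of_neg ha (by linarith) hpm
    have h2 : (a + b) ^ (p - 1) < b ^ (p - 1) :=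
      Real.rpow_lt_rpow_of_neg hb (by linarith) hpm
    have hab : (0 : ℝ) < a + b := by linarith
    have e0 : (a + b) ^ p = a * (a + b) ^ (p - 1) + b * (a + b) ^ (p - 1) := by
      rw [← add_mul]
      rw [Real.rpow_sub hab, Real.rpow_one]
      field_simp
    have ea : a ^ p = a * a ^ (p - 1) := by
      rw [Real.rpow_sub ha, Real.rpow_one]; field_simp
    have eb : b ^ p = b * b ^ (p - 1) := by
      rw [Real.rpow_sub hb, Real.rpow_one]; field_simp
    rw [e0, ea, eb]
    exact add_lt_add (by nlinarith) (by nlinarith)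
  have hneg : (a + b) ^ p - a ^ p - b ^ p < 0 := by linarith
  refine ⟨hneg, fun ωn hωn => ?_⟩
  have hc : (0 : ℝ) < (n : ℝ)⁻¹ * ωn ^ (-(2 : ℝ) / n) / 2 := by positivity
  exact mul_neg_of_pos_of_neg hc hneg
end
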